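/- Let 𝐦 and 𝐧 be strictly increasing sequences of positive integers whose symmetric difference (as subsets of ℕ) is finite. Then a basis 𝓑 of a Banach space X is (𝐧, strong partially greedy) if and only if it is (𝐦, strong partially greedy). -/
import Mathlib


open scoped BigOperators ENNReal NNReal

/-- The collection `𝕋(𝐧)`: pairs of finite sets `(A, D)` with `A ⊆ 𝐧`, `|A| ≤ |D|`
and `A < D ∩ 𝐧`. -/
def TPair (seq : ℕ → ℕ) (A D : Finset ℕ) : Prop :=
  (↑A : Set ℕ) ⊆ Set.range seq ∧ A.card ≤ D.card ∧
    ∀ a ∈ A, ∀ d ∈ D, d ∈ Set.range seq → a < d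

/-- The collection `𝕊(𝐧)`: pairs of finite sets `(A, D)` with `A ⊆ 𝐧` and `|A| ≤ |D|`. -/
def SPair (seq : ℕ → ℕ) (A D : Finset ℕ) : Prop :=
  (↑A : Set ℕ) ⊆ Set.range seq ∧ A.card ≤ D.card

/-- The interval `{n_{k+1}, …, n_{k+m}}` of `m` consecutive terms of the sequence `seq`
(0-indexed: `seq k, …, seq (k+m-1)`). -/
def intervalSet (seq : ℕ → ℕ) (k m : ℕ) : Finset ℕ :=
  (Finset.range m).image fun i => seq (k + i)

/-- The (1-based) index `ι(max A)` of the largest element of `A` in the sequence `seq`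
(`0` if `A` is empty). -/
noncomputable def iotaMax (seq : ℕ → ℕ) (A : Finset ℕ) : ℕ :=
  if h : A.Nonempty then sInf {i | seq i = A.max' h} + 1 else 0

/-- The collection `𝕋^ω(𝐧)`: pairs of finite sets `(A, D)` with `A ⊆ 𝐧`, `ω(A) ≤ ω(D)`
and `A < D ∩ 𝐧`. -/
def WTPair (w : Set ℕ → ℝ≥0∞) (seq : ℕ → ℕ) (A D : Finset ℕ) : Prop :=
  (↑A : Set ℕ) ⊆ Set.range seq ∧ w (↑A : Set ℕ) ≤ w (↑D : Set ℕ) ∧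
    ∀ a ∈ A, ∀ d ∈ D, d ∈ Set.range seq → a < d

/-- A (semi-normalized) basis `(e_n)` of a Banach space `X`, together with its biorthogonal
functionals `(e_n^*)`: the span of the `e_n` is norm-dense, `e_j^*(e_k) = δ_{jk}`, and the
norms of the `e_n` and `e_n^*` are bounded above and away from zero. -/
structure BasisOf (𝕜 : Type*) (X : Type*) [RCLike 𝕜] [NormedAddCommGroup X]
    [NormedSpace 𝕜 X] where
  e : ℕ → X
  coord : ℕ → X →L[𝕜] 𝕜
  dense_span : Dense (↑(Submodule.span 𝕜 (Set.range e)) : Set X)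
  biorth : ∀ j k : ℕ, coord j (e k) = if j = k then (1 : 𝕜) else 0
  norm_bounds : ∃ c₁ c₂ : ℝ, 0 < c₁ ∧ (∀ n, c₁ ≤ ‖e n‖ ∧ c₁ ≤ ‖coord n‖) ∧
    ∀ n, ‖e n‖ ≤ c₂ ∧ ‖coord n‖ ≤ c₂

namespace BasisOf

variable {𝕜 : Type*} {X : Type*} [RCLike 𝕜] [NormedAddCommGroup X] [NormedSpace 𝕜 X]
variable (B : BasisOf 𝕜 X)

/-- The projection `P_A(x) = ∑_{n ∈ A} e_n^*(x) e_n`. -/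
noncomputable def proj (A : Finset ℕ) (x : X) : X := ∑ n ∈ A, B.coord n x • B.e n

/-- `1_{εA} = ∑_{n ∈ A} ε_n e_n`. -/
noncomputable def sgnSum (ε : ℕ → 𝕜) (A : Finset ℕ) : X := ∑ n ∈ A, ε n • B.e n

/-- `1_A = ∑_{n ∈ A} e_n`. -/
noncomputable def ones (A : Finset ℕ) : X := ∑ n ∈ A, B.e n

/-- `P^𝐧_m(x) = ∑_{i=1}^m e_{n_i}^*(x) e_{n_i}`, the projection on the first `m` terms of the
subsequence given by `seq`. -/
noncomputable def projSeq (seq : ℕ → ℕ) (m : ℕ) (x : X) : X :=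
  ∑ i ∈ Finset.range m, B.coord (seq i) x • B.e (seq i)

/-- `A` is a greedy set of `x`: the coefficients inside `A` dominate those outside. -/
def IsGreedySet (x : X) (A : Finset ℕ) : Prop :=
  ∀ a ∈ A, ∀ b ∉ A, ‖B.coord b x‖ ≤ ‖B.coord a x‖

/-- The support `{n : e_n^*(x) ≠ 0}`. -/
def supp (x : X) : Set ℕ := {n | B.coord n x ≠ 0}

/-- `𝓑` is `C`-(`𝐧`, strong partially greedy):
`‖x - G_m(x)‖ ≤ C ⋅ σ̂^𝐧_m(x)` for all `x`, all `m ≥ 1` and all greedy sums. -/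
def SPGWith (seq : ℕ → ℕ) (C : ℝ) : Prop :=
  ∀ x : X, ∀ m : ℕ, 1 ≤ m → ∀ A : Finset ℕ, A.card = m → B.IsGreedySet x A →
    ∀ k : ℕ, k ≤ m → ‖x - B.proj A x‖ ≤ C * ‖x - B.projSeq seq k x‖

/-- `𝓑` is (`𝐧`, strong partially greedy). -/
def SPG (seq : ℕ → ℕ) : Prop := ∃ C : ℝ, 1 ≤ C ∧ B.SPGWith seq C

/-- `𝓑` is quasi-greedy with constant `C`. -/
def QuasiGreedyWith (C : ℝ) : Prop :=
  ∀ x : X, ∀ A : Finset ℕ, A.Nonempty → B.IsGreedySet x A → ‖B.proj A x‖ ≤ C * ‖x‖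

/-- `𝓑` is quasi-greedy. -/
def QuasiGreedy : Prop := ∃ C : ℝ, B.QuasiGreedyWith C

/-- `𝓑` is suppression quasi-greedy with constant `C`. -/
def SuppQGWith (C : ℝ) : Prop :=
  ∀ x : X, ∀ A : Finset ℕ, A.Nonempty → B.IsGreedySet x A → ‖x - B.proj A x‖ ≤ C * ‖x‖

/-- `𝓑` is `C`-(`𝐧`, PSLC). -/
def PSLCWith (seq : ℕ → ℕ) (C : ℝ) : Prop :=
  ∀ x : X, (∀ n, ‖B.coord n x‖ ≤ 1) → ∀ A D : Finset ℕ, TPair seq A D →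
    (∀ d ∈ D, B.coord d x = 0) →
    (∀ a ∈ A, ∀ j : ℕ, (j ∈ D ∨ B.coord j x ≠ 0) → j ∈ Set.range seq → a < j) →
    ∀ ε δ : ℕ → 𝕜, (∀ n, ‖ε n‖ = 1) → (∀ n, ‖δ n‖ = 1) →
      ‖x + B.sgnSum ε A‖ ≤ C * ‖x + B.sgnSum δ D‖

/-- `𝓑` is (`𝐧`, PSLC). -/
def PSLC (seq : ℕ → ℕ) : Prop := ∃ C : ℝ, 1 ≤ C ∧ B.PSLCWith seq C

/-- `𝓑` is (`𝐧`, superconservative) with constant `C`. -/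
def SuperconservativeWith (seq : ℕ → ℕ) (C : ℝ) : Prop :=
  ∀ A D : Finset ℕ, TPair seq A D →
    ∀ ε δ : ℕ → 𝕜, (∀ n, ‖ε n‖ = 1) → (∀ n, ‖δ n‖ = 1) →
      ‖B.sgnSum ε A‖ ≤ C * ‖B.sgnSum δ D‖

/-- `𝓑` is (`𝐧`, superconservative). -/
def Superconservative (seq : ℕ → ℕ) : Prop :=
  ∃ C : ℝ, 0 < C ∧ B.SuperconservativeWith seq C

/-- `𝓑` is (`𝐧`, conservative) with constant `C`. -/
def ConservativeWith (seq : ℕ → ℕ) (C : ℝ) : Prop :=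
  ∀ A D : Finset ℕ, TPair seq A D → ‖B.ones A‖ ≤ C * ‖B.ones D‖

/-- `𝓑` is (`𝐧`, conservative). -/
def Conservative (seq : ℕ → ℕ) : Prop := ∃ C : ℝ, 0 < C ∧ B.ConservativeWith seq C

/-- `𝓑` is (`𝐧`, democratic) with constant `C`. -/
def DemocraticWith (seq : ℕ → ℕ) (C : ℝ) : Prop :=
  ∀ A D : Finset ℕ, SPair seq A D → ‖B.ones A‖ ≤ C * ‖B.ones D‖

/-- `𝓑` is (`𝐧`, democratic). -/
def Democratic (seq : ℕ → ℕ) : Prop := ∃ C : ℝ, B.DemocraticWith seq C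

/-- `𝓑` is (`𝐧`, almost greedy) with constant `C`:
`‖x - G_m(x)‖ ≤ C σ̃^𝐧_m(x)` where `σ̃^𝐧_m(x) = inf {‖x - P_D(x)‖ : D ⊆ 𝐧, |D| = m}`. -/
def AlmostGreedyWith (seq : ℕ → ℕ) (C : ℝ) : Prop :=
  ∀ x : X, ∀ m : ℕ, 1 ≤ m → ∀ A : Finset ℕ, A.card = m → B.IsGreedySet x A →
    ∀ D : Finset ℕ, (↑D : Set ℕ) ⊆ Set.range seq → D.card = m →
      ‖x - B.proj A x‖ ≤ C * ‖x - B.proj D x‖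

/-- `𝓑` is (`𝐧`, almost greedy). -/
def AlmostGreedy (seq : ℕ → ℕ) : Prop := ∃ C : ℝ, 1 ≤ C ∧ B.AlmostGreedyWith seq C

/-- `𝓑` is 1-unconditional. -/
def OneUnconditional : Prop :=
  ∀ (F : Finset ℕ) (a b : ℕ → 𝕜), (∀ n, ‖a n‖ ≤ ‖b n‖) →
    ‖∑ n ∈ F, a n • B.e n‖ ≤ ‖∑ n ∈ F, b n • B.e n‖

/-- `𝓑` is `C`-(`𝐧`, consecutive almost greedy) of type I. -/
def CAGIWith (seq : ℕ → ℕ) (C : ℝ) : Prop :=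
  ∀ x : X, ∀ m : ℕ, 1 ≤ m → ∀ A : Finset ℕ, A.card = m → B.IsGreedySet x A →
    ∀ k : ℕ, ‖x - B.proj A x‖ ≤ C * ‖x - B.proj (intervalSet seq k m) x‖

/-- `𝓑` is `C`-(`𝐧`, consecutive almost greedy) of type II. -/
def CAGIIWith (seq : ℕ → ℕ) (C : ℝ) : Prop :=
  ∀ x : X, ∀ m : ℕ, 1 ≤ m → ∀ A : Finset ℕ, A.card = m → B.IsGreedySet x A →
    ∀ k p : ℕ, ((↑(intervalSet seq k p) : Set ℕ) ∩ B.supp x).ncard ≤ m →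
      ‖x - B.proj A x‖ ≤ C * ‖x - B.proj (intervalSet seq k p) x‖

/-- `𝓑` is `C`-(`𝐧`, RSLC). -/
def RSLCWith (seq : ℕ → ℕ) (C : ℝ) : Prop :=
  ∀ x : X, (∀ n, ‖B.coord n x‖ ≤ 1) → ∀ A D : Finset ℕ, SPair seq A D →
    (∀ d ∈ D, B.coord d x = 0) →
    (∀ j : ℕ, (j ∈ D ∨ B.coord j x ≠ 0) → j ∈ Set.range seq →
      (∀ a ∈ A, j < a) ∨ (∀ a ∈ A, a < j)) →
    ∀ ε δ : ℕ → 𝕜, (∀ n, ‖ε n‖ = 1) → (∀ n, ‖δ n‖ = 1) →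
      ‖x + B.sgnSum ε A‖ ≤ C * ‖x + B.sgnSum δ D‖

/-- `𝓑` is `C`-(`𝐧`, SLC). -/
def SLCWith (seq : ℕ → ℕ) (C : ℝ) : Prop :=
  ∀ x : X, (∀ n, ‖B.coord n x‖ ≤ 1) → ∀ A D : Finset ℕ, SPair seq A D →
    Disjoint A D → (∀ a ∈ A, B.coord a x = 0) → (∀ d ∈ D, B.coord d x = 0) →
    ∀ ε δ : ℕ → 𝕜, (∀ n, ‖ε n‖ = 1) → (∀ n, ‖δ n‖ = 1) →
      ‖x + B.sgnSum ε A‖ ≤ C * ‖x + B.sgnSum δ D‖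

/-- The Lebesgue-type parameter `L̂^𝐧_m`: the least constant `C ∈ [0,∞]` with
`‖x - G_m(x)‖ ≤ C σ̂^𝐧_m(x)` for all `x` and all greedy sums `G_m(x)`. -/
noncomputable def Lhat (seq : ℕ → ℕ) (m : ℕ) : ℝ≥0∞ :=
  sInf {C : ℝ≥0∞ | ∀ (x : X) (A : Finset ℕ), A.card = m → B.IsGreedySet x A →
    ∀ k : ℕ, k ≤ m →
      (‖x - B.proj A x‖₊ : ℝ≥0∞) ≤ C * (‖x - B.projSeq seq k x‖₊ : ℝ≥0∞)}

/-- The parameter `g_m^c`. -/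
noncomputable def gc (m : ℕ) : ℝ≥0∞ :=
  ⨆ (x : X) (_ : x ≠ 0) (A : Finset ℕ) (_ : A.card ≤ m) (_ : B.IsGreedySet x A),
    (‖x - B.proj A x‖₊ : ℝ≥0∞) / (‖x‖₊ : ℝ≥0∞)

/-- The parameter `g̃_m`. -/
noncomputable def gtilde (m : ℕ) : ℝ≥0∞ :=
  ⨆ (x : X) (_ : x ≠ 0) (A : Finset ℕ) (A' : Finset ℕ) (_ : A ⊆ A') (_ : A.card < A'.card)
    (_ : A'.card ≤ m) (_ : B.IsGreedySet x A) (_ : B.IsGreedySet x A'),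
    (‖B.proj A' x - B.proj A x‖₊ : ℝ≥0∞) / (‖x‖₊ : ℝ≥0∞)

/-- The parameter `sc^𝐧_m`. -/
noncomputable def scParam (seq : ℕ → ℕ) (m : ℕ) : ℝ≥0∞ :=
  ⨆ (A : Finset ℕ) (D : Finset ℕ) (_ : TPair seq A D) (_ : D.card ≤ m)
    (_ : ∀ a ∈ A, a ≤ seq (m - 1)) (ε : ℕ → 𝕜) (_ : ∀ n, ‖ε n‖ = 1)
    (δ : ℕ → 𝕜) (_ : ∀ n, ‖δ n‖ = 1),
    (‖B.sgnSum ε A‖₊ : ℝ≥0∞) / (‖B.sgnSum δ D‖₊ : ℝ≥0∞)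

/-- The parameter `ω^𝐧_m`. -/
noncomputable def omegaParam (seq : ℕ → ℕ) (m : ℕ) : ℝ≥0∞ :=
  ⨆ (x : X) (_ : ∀ n, ‖B.coord n x‖ ≤ 1) (A : Finset ℕ) (D : Finset ℕ)
    (_ : (↑A : Set ℕ) ⊆ Set.range seq) (_ : A.card ≤ D.card) (_ : D.card ≤ m)
    (_ : ∀ a ∈ A, a ≤ seq (m - 1)) (_ : ∀ d ∈ D, B.coord d x = 0)
    (_ : ∀ a ∈ A, ∀ j : ℕ, (j ∈ D ∨ B.coord j x ≠ 0) → j ∈ Set.range seq → a < j)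
    (ε : ℕ → 𝕜) (_ : ∀ n, ‖ε n‖ = 1) (δ : ℕ → 𝕜) (_ : ∀ n, ‖δ n‖ = 1),
    (‖x + B.sgnSum ε A‖₊ : ℝ≥0∞) / (‖x + B.sgnSum δ D‖₊ : ℝ≥0∞)

/-- The parameter `ω̂^𝐧_m`. -/
noncomputable def omegaHatParam (seq : ℕ → ℕ) (m : ℕ) : ℝ≥0∞ :=
  ⨆ (x : X) (_ : ∀ n, ‖B.coord n x‖ ≤ 1) (A : Finset ℕ) (D : Finset ℕ)
    (_ : (↑A : Set ℕ) ⊆ Set.range seq) (_ : A.card ≤ D.card) (_ : D.card ≤ m)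
    (_ : ∀ a ∈ A, a ≤ seq (m - 1))
    (_ : ∀ d ∈ D, B.coord d (x - B.proj A x) = 0)
    (_ : ∀ a ∈ A, ∀ j : ℕ, (j ∈ D ∨ B.coord j (x - B.proj A x) ≠ 0) →
      j ∈ Set.range seq → a < j)
    (ε : ℕ → 𝕜) (_ : ∀ n, ‖ε n‖ = 1),
    (‖x‖₊ : ℝ≥0∞) / (‖x - B.proj A x + B.sgnSum ε D‖₊ : ℝ≥0∞)

/-- `κ = sup_{j,k} ‖e_j‖ ‖e_k^*‖`. -/
noncomputable def kappa : ℝ≥0∞ :=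
  ⨆ (j : ℕ) (k : ℕ), ((‖B.e j‖₊ * ‖B.coord k‖₊ : ℝ≥0) : ℝ≥0∞)

/-- `𝓑` is `𝐬`-(`𝐧`, strong partially greedy) with constant `C`:
the strong partially greedy inequality for all orders `m` in the sequence `s`. -/
def SPGOnWith (seq : ℕ → ℕ) (s : ℕ → ℕ) (C : ℝ) : Prop :=
  ∀ x : X, ∀ i : ℕ, ∀ A : Finset ℕ, A.card = s i → B.IsGreedySet x A →
    ∀ k : ℕ, k ≤ s i → ‖x - B.proj A x‖ ≤ C * ‖x - B.projSeq seq k x‖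

/-- `𝓑` is (`λ`, `𝐧`, strong partially greedy). -/
def LamSPG (seq : ℕ → ℕ) (lam : ℝ) : Prop :=
  ∃ C : ℝ, 1 ≤ C ∧ ∀ x : X, ∀ m : ℕ, 1 ≤ m →
    ∀ A : Finset ℕ, A.card = ⌈lam * (m : ℝ)⌉₊ → B.IsGreedySet x A →
      ∀ k : ℕ, k ≤ m → ‖x - B.proj A x‖ ≤ C * ‖x - B.projSeq seq k x‖

/-- `𝓑` is (`λ`, `𝐧`, PSLC). -/
def LamPSLC (seq : ℕ → ℕ) (lam : ℝ) : Prop :=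
  ∃ C : ℝ, 1 ≤ C ∧ ∀ x : X, (∀ n, ‖B.coord n x‖ ≤ 1) →
    ∀ A D : Finset ℕ, (↑A : Set ℕ) ⊆ Set.range seq → A.card ≤ D.card →
      (lam - 1) * (iotaMax seq A : ℝ) + A.card ≤ D.card →
      (∀ d ∈ D, B.coord d x = 0) →
      (∀ a ∈ A, ∀ j : ℕ, (j ∈ D ∨ B.coord j x ≠ 0) → j ∈ Set.range seq → a < j) →
      ∀ ε δ : ℕ → 𝕜, (∀ n, ‖ε n‖ = 1) → (∀ n, ‖δ n‖ = 1) →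
        ‖x + B.sgnSum ε A‖ ≤ C * ‖x + B.sgnSum δ D‖

/-- `𝓑` is (`λ`, `𝐧`, superconservative). -/
def LamSuperconservative (seq : ℕ → ℕ) (lam : ℝ) : Prop :=
  ∃ C : ℝ, 0 < C ∧ ∀ A D : Finset ℕ, TPair seq A D →
    (lam - 1) * (iotaMax seq A : ℝ) + A.card ≤ D.card →
    ∀ ε δ : ℕ → 𝕜, (∀ n, ‖ε n‖ = 1) → (∀ n, ‖δ n‖ = 1) →
      ‖B.sgnSum ε A‖ ≤ C * ‖B.sgnSum δ D‖

/-- `𝓑` is (`λ`, `𝐧`, conservative). -/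
def LamConservative (seq : ℕ → ℕ) (lam : ℝ) : Prop :=
  ∃ C : ℝ, 0 < C ∧ ∀ A D : Finset ℕ, TPair seq A D →
    (lam - 1) * (iotaMax seq A : ℝ) + A.card ≤ D.card →
    ‖B.ones A‖ ≤ C * ‖B.ones D‖

/-- `𝓑` is `ω`-(`𝐧`, strong partially greedy) for the weight on sets `w`. -/
def WSPG (seq : ℕ → ℕ) (w : Set ℕ → ℝ≥0∞) : Prop :=
  ∃ C : ℝ, 1 ≤ C ∧ ∀ x : X, ∀ m : ℕ, 1 ≤ m → ∀ A : Finset ℕ, A.card = m →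
    B.IsGreedySet x A → ∀ m' : ℕ,
      w (↑((Finset.range m').image seq \ A) : Set ℕ) ≤
        w (↑(A \ (Finset.range m').image seq) : Set ℕ) →
      ‖x - B.proj A x‖ ≤ C * ‖x - B.proj ((Finset.range m').image seq) x‖

/-- `𝓑` is `ω`-(`𝐧`, PSLC). -/
def WPSLC (seq : ℕ → ℕ) (w : Set ℕ → ℝ≥0∞) : Prop :=
  ∃ C : ℝ, 1 ≤ C ∧ ∀ x : X, (∀ n, ‖B.coord n x‖ ≤ 1) →
    ∀ A D : Finset ℕ, WTPair w seq A D →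
      (∀ d ∈ D, B.coord d x = 0) →
      (∀ a ∈ A, ∀ j : ℕ, (j ∈ D ∨ B.coord j x ≠ 0) → j ∈ Set.range seq → a < j) →
      ∀ ε δ : ℕ → 𝕜, (∀ n, ‖ε n‖ = 1) → (∀ n, ‖δ n‖ = 1) →
        ‖x + B.sgnSum ε A‖ ≤ C * ‖x + B.sgnSum δ D‖

/-- `𝓑` is `ω`-(`𝐧`, superconservative). -/
def WSuperconservative (seq : ℕ → ℕ) (w : Set ℕ → ℝ≥0∞) : Prop :=
  ∃ C : ℝ, 0 < C ∧ ∀ A D : Finset ℕ, WTPair w seq A D →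
    ∀ ε δ : ℕ → 𝕜, (∀ n, ‖ε n‖ = 1) → (∀ n, ‖δ n‖ = 1) →
      ‖B.sgnSum ε A‖ ≤ C * ‖B.sgnSum δ D‖

/-- `𝓑` is `ω`-(`𝐧`, conservative). -/
def WConservative (seq : ℕ → ℕ) (w : Set ℕ → ℝ≥0∞) : Prop :=
  ∃ C : ℝ, 0 < C ∧ ∀ A D : Finset ℕ, WTPair w seq A D → ‖B.ones A‖ ≤ C * ‖B.ones D‖

end BasisOf

/-- A Banach space over `𝕜` equipped with a basis. -/
structure BanachWithBasis (𝕜 : Type*) [RCLike 𝕜] where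
  carrier : Type
  [grp : NormedAddCommGroup carrier]
  [mod : NormedSpace 𝕜 carrier]
  [comp : CompleteSpace carrier]
  basis : BasisOf 𝕜 carrier

attribute [instance] BanachWithBasis.grp BanachWithBasis.mod BanachWithBasis.comp

section Helpers

namespace BasisOf

variable {𝕜 X : Type*} [RCLike 𝕜] [NormedAddCommGroup X] [NormedSpace 𝕜 X]
variable (B : BasisOf 𝕜 X)

lemma coord_sum_eq (S : Finset ℕ) (f : ℕ → 𝕜) (j : ℕ) :
    B.coord j (∑ n ∈ S, f n • B.e n) = if j ∈ S then f j else 0 := by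
  rw [map_sum]
  have h : ∀ n ∈ S, B.coord j (f n • B.e n) = if n = j then f n else 0 := by
    intro n _
    rw [map_smul, B.biorth j n, smul_eq_mul]
    rcases eq_or_ne j n with h | h
    · simp [h]
    · rw [if_neg h, if_neg (fun hh => h hh.symm), mul_zero]
  rw [Finset.sum_congr rfl h, Finset.sum_ite_eq' S j f]

lemma proj_sum_subset {S G : Finset ℕ} (hGS : G ⊆ S) (f : ℕ → 𝕜) :
    B.proj G (∑ n ∈ S, f n • B.e n) = ∑ n ∈ G, f n • B.e n := by
  unfold proj
  refine Finset.sum_congr rfl fun n hn => ?_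
  rw [coord_sum_eq, if_pos (hGS hn)]

lemma coord_proj (S : Finset ℕ) (x : X) (j : ℕ) :
    B.coord j (B.proj S x) = if j ∈ S then B.coord j x else 0 :=
  B.coord_sum_eq S (fun n => B.coord n x) j

lemma coord_sub_proj {S : Finset ℕ} {j : ℕ} (hj : j ∉ S) (x : X) :
    B.coord j (x - B.proj S x) = B.coord j x := by
  rw [map_sub, coord_proj, if_neg hj, sub_zero]

lemma projSeq_eq_proj (seq : ℕ → ℕ) (hinj : Function.Injective seq) (k : ℕ) (x : X) :
    B.projSeq seq k x = B.proj ((Finset.range k).image seq) x := by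
  unfold projSeq proj
  rw [Finset.sum_image (fun i _ j _ h => hinj h)]

lemma norm_proj_le_card (S : Finset ℕ) (x : X) (r c₂ : ℝ)
    (he : ∀ n, ‖B.e n‖ ≤ c₂) (hc : ∀ n ∈ S, ‖B.coord n x‖ ≤ r) :
    ‖B.proj S x‖ ≤ S.card * (r * c₂) := by
  calc ‖B.proj S x‖ ≤ ∑ n ∈ S, ‖B.coord n x • B.e n‖ := norm_sum_le _ _
    _ ≤ ∑ _n ∈ S, r * c₂ := by
        refine Finset.sum_le_sum fun n hn => ?_
        rw [norm_smul]
        exact mul_le_mul (hc n hn) (he n) (norm_nonneg _)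
          (le_trans (norm_nonneg _) (hc n hn))
    _ = S.card * (r * c₂) := by rw [Finset.sum_const, nsmul_eq_mul]

/-- existence of the cut index J with `i < J ↔ seq i ≤ M`. -/
lemma exists_cut (seq : ℕ → ℕ) (hs : StrictMono seq) (M : ℕ) :
    ∃ J : ℕ, ∀ i, i < J ↔ seq i ≤ M := by
  classical
  set S : Finset ℕ := (Finset.range (M + 1)).filter (fun i => seq i ≤ M) with hS
  have hmem : ∀ i, i ∈ S ↔ seq i ≤ M := by
    intro i
    simp only [hS, Finset.mem_filter, Finset.mem_range]
    constructor
    · exact fun h => h.2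
    · intro h
      exact ⟨lt_of_le_of_lt (le_trans hs.le_apply h) (Nat.lt_succ_self M), h⟩
  have hdc : ∀ i j : ℕ, i ≤ j → j ∈ S → i ∈ S := by
    intro i j hij hj
    rw [hmem] at *
    exact le_trans (hs.monotone hij) hj
  refine ⟨S.card, fun i => ?_⟩
  have hsub : S ⊆ Finset.range S.card := by
    intro j hj
    rw [Finset.mem_range]
    by_contra hcon
    push_neg at hcon
    have h1 : Finset.range (j + 1) ⊆ S := fun i hi =>
      hdc i j (Nat.lt_succ_iff.mp (Finset.mem_range.mp hi)) hj
    have := Finset.card_le_card h1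
    rw [Finset.card_range] at this
    omega
  have heq : S = Finset.range S.card :=
    Finset.eq_of_subset_of_card_le hsub (by rw [Finset.card_range])
  rw [← hmem, heq, Finset.mem_range]
  simp [Finset.card_range]

end BasisOf

end Helpers
namespace BasisOf

variable {𝕜 X : Type*} [RCLike 𝕜] [NormedAddCommGroup X] [NormedSpace 𝕜 X]
variable (B : BasisOf 𝕜 X)

/-- Padding lemma: from the SPG property, a block `Bs` inside the `J`-th initial segment
of `nseq`, with small coefficients, is dominated by a larger block `A₁` with large
coefficients lying outside that initial segment. -/
lemma padding {nseq : ℕ → ℕ} (hn : StrictMono nseq) {C : ℝ} (hC1 : 1 ≤ C)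
    (hC : B.SPGWith nseq C) (J : ℕ) (A₁ Bs : Finset ℕ)
    (hBsub : Bs ⊆ (Finset.range J).image nseq)
    (hdisj : Disjoint A₁ ((Finset.range J).image nseq))
    (hcard : Bs.card ≤ A₁.card) (θ : ℝ) (hθ : 0 ≤ θ) (x : X)
    (hB : ∀ b ∈ Bs, ‖B.coord b x‖ ≤ θ) (hA : ∀ a ∈ A₁, θ ≤ ‖B.coord a x‖) :
    ‖B.proj Bs x‖ ≤ C * ‖B.proj A₁ x‖ := by
  classical
  rcases Finset.eq_empty_or_nonempty Bs with hBe | hBne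
  · simp only [hBe, proj, Finset.sum_empty, norm_zero]
    exact mul_nonneg (by linarith) (norm_nonneg _)
  set NJ : Finset ℕ := (Finset.range J).image nseq with hNJ
  have hJ1 : 1 ≤ J := by
    obtain ⟨b, hb⟩ := hBne
    obtain ⟨i, hi, -⟩ := Finset.mem_image.mp (hBsub hb)
    have := Finset.mem_range.mp hi
    omega
  set S : Finset ℕ := NJ ∪ A₁ with hS
  set c : ℕ → 𝕜 := fun n => if n ∈ NJ \ Bs then ((θ : ℝ) : 𝕜) else B.coord n x with hc
  set z : X := ∑ n ∈ S, c n • B.e n with hzdef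
  set G : Finset ℕ := A₁ ∪ (NJ \ Bs) with hG
  have hGS : G ⊆ S :=
    Finset.union_subset Finset.subset_union_right
      (Finset.sdiff_subset.trans Finset.subset_union_left)
  have hNJcard : NJ.card = J := by
    rw [hNJ, Finset.card_image_of_injective _ hn.injective, Finset.card_range]
  have hdisjG : Disjoint A₁ (NJ \ Bs) := hdisj.mono_right Finset.sdiff_subset
  have hGcard : G.card = A₁.card + (J - Bs.card) := by
    rw [hG, Finset.card_union_of_disjoint hdisjG, Finset.card_sdiff_of_subset hBsub, hNJcard]
  have hBsJ : Bs.card ≤ J := hNJcard ▸ Finset.card_le_card hBsub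
  have hJG : J ≤ G.card := by omega
  have h1G : 1 ≤ G.card := le_trans hJ1 hJG
  have hz : ∀ j, B.coord j z = if j ∈ S then c j else 0 := fun j => B.coord_sum_eq S c j
  have hgreedy : B.IsGreedySet z G := by
    intro a ha b hb
    have hbz : ‖B.coord b z‖ ≤ θ := by
      rw [hz]
      split_ifs with hbS
      · have hbBs : b ∈ Bs := by
          rcases Finset.mem_union.mp hbS with h | h
          · by_contra hcon
            exact hb (Finset.mem_union.mpr (Or.inr (Finset.mem_sdiff.mpr ⟨h, hcon⟩)))
          · exact absurd (Finset.mem_union.mpr (Or.inl h)) hb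
        have : b ∉ NJ \ Bs := fun hmem => (Finset.mem_sdiff.mp hmem).2 hbBs
        rw [hc]; simp only [this, if_false]
        exact hB b hbBs
      · simpa using hθ
    have haz : θ ≤ ‖B.coord a z‖ := by
      rw [hz, if_pos (hGS ha)]
      rcases Finset.mem_union.mp ha with h | h
      · have : a ∉ NJ \ Bs := fun hmem =>
          (Finset.disjoint_left.mp hdisjG) h hmem
        rw [hc]; simp only [this, if_false]
        exact hA a h
      · rw [hc]; simp only [h, if_true]
        rw [RCLike.norm_ofReal, abs_of_nonneg hθ]
    exact le_trans hbz haz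
  have happ := hC z G.card h1G G rfl hgreedy J hJG
  have hL : z - B.proj G z = B.proj Bs x := by
    rw [B.proj_sum_subset hGS]
    have h1 : z - ∑ n ∈ G, c n • B.e n = ∑ n ∈ S \ G, c n • B.e n :=
      sub_eq_iff_eq_add.mpr (Finset.sum_sdiff hGS).symm
    have hSG : S \ G = Bs := by
      ext b
      constructor
      · intro hb
        obtain ⟨hbS, hbG⟩ := Finset.mem_sdiff.mp hb
        have hbA : b ∉ A₁ := fun h => hbG (Finset.mem_union.mpr (Or.inl h))
        have hbNJB : b ∉ NJ \ Bs := fun h => hbG (Finset.mem_union.mpr (Or.inr h))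
        rcases Finset.mem_union.mp hbS with h | h
        · by_contra hcon; exact hbNJB (Finset.mem_sdiff.mpr ⟨h, hcon⟩)
        · exact absurd h hbA
      · intro hb
        refine Finset.mem_sdiff.mpr ⟨Finset.mem_union.mpr (Or.inl (hBsub hb)), ?_⟩
        intro hG'
        rcases Finset.mem_union.mp hG' with h | h
        · exact Finset.disjoint_right.mp hdisj (hBsub hb) h
        · exact (Finset.mem_sdiff.mp h).2 hb
    rw [h1, hSG]
    refine Finset.sum_congr rfl fun n hn' => ?_
    have : n ∉ NJ \ Bs := fun hmem => (Finset.mem_sdiff.mp hmem).2 hn'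
    rw [hc]; simp only [this, if_false]
  have hR : z - B.projSeq nseq J z = B.proj A₁ x := by
    rw [B.projSeq_eq_proj nseq hn.injective J z, ← hNJ,
      B.proj_sum_subset (Finset.subset_union_left : NJ ⊆ S)]
    have h1 : z - ∑ n ∈ NJ, c n • B.e n = ∑ n ∈ S \ NJ, c n • B.e n :=
      sub_eq_iff_eq_add.mpr (Finset.sum_sdiff Finset.subset_union_left).symm
    have hSN : S \ NJ = A₁ := by
      ext b
      constructor
      · intro hb
        obtain ⟨hbS, hbN⟩ := Finset.mem_sdiff.mp hb
        rcases Finset.mem_union.mp hbS with h | h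
        · exact absurd h hbN
        · exact h
      · intro hb
        exact Finset.mem_sdiff.mpr ⟨Finset.mem_union.mpr (Or.inr hb),
          fun hN => Finset.disjoint_left.mp hdisj hb hN⟩
    rw [h1, hSN]
    refine Finset.sum_congr rfl fun n hn' => ?_
    have : n ∉ NJ \ Bs := fun hmem =>
      Finset.disjoint_left.mp hdisj hn' (Finset.mem_sdiff.mp hmem).1
    rw [hc]; simp only [this, if_false]
  rw [hL, hR] at happ
  exact happ

end BasisOf
namespace BasisOf

variable {𝕜 X : Type*} [RCLike 𝕜] [NormedAddCommGroup X] [NormedSpace 𝕜 X]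
variable (B : BasisOf 𝕜 X)

lemma proj_union {S T : Finset ℕ} (h : Disjoint S T) (x : X) :
    B.proj (S ∪ T) x = B.proj S x + B.proj T x :=
  Finset.sum_union h

set_option maxHeartbeats 2000000 in
lemma spg_transfer {mseq nseq : ℕ → ℕ} (hm : StrictMono mseq) (hn : StrictMono nseq)
    (hdiff : Set.Finite (symmDiff (Set.range mseq) (Set.range nseq))) :
    B.SPG nseq → B.SPG mseq := by
  classical
  rintro ⟨C, hC1, hC⟩
  obtain ⟨c₁, c₂, hc₁, hlow, hup⟩ := B.norm_bounds
  have hc₂0 : 0 ≤ c₂ := le_trans (norm_nonneg _) (hup 0).1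
  set F : Finset ℕ := hdiff.toFinset with hF
  set fc : ℝ := (F.card : ℝ) * (c₂ * c₂) with hfc
  have hfc0 : 0 ≤ fc := by positivity
  refine ⟨1 + (1 + C) + 2 * fc + C * (1 + C) + C * fc, by nlinarith, ?_⟩
  intro x m h1m A hAcard hAg k hkm
  rw [B.projSeq_eq_proj mseq hm.injective]
  set K : Finset ℕ := (Finset.range k).image mseq with hK
  set y : X := x - B.proj K x with hy
  set Y : ℝ := ‖y‖ with hYdef
  have hY0 : 0 ≤ Y := norm_nonneg _
  have hKcard : K.card = k := by
    rw [hK, Finset.card_image_of_injective _ hm.injective, Finset.card_range]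
  -- case k = 0
  by_cases hk0 : k = 0
  · have hK0 : K = ∅ := by
      rw [hK, hk0]; simp
    have hy0 : y = x := by rw [hy, hK0]; simp [proj]
    have happ := hC x m h1m A hAcard hAg 0 (Nat.zero_le m)
    rw [show B.projSeq nseq 0 x = 0 by simp [projSeq], sub_zero] at happ
    rw [hy0] at hYdef
    have hCle : C ≤ 1 + (1 + C) + 2 * fc + C * (1 + C) + C * fc := by nlinarith
    calc ‖x - B.proj A x‖ ≤ C * ‖x‖ := happ
      _ = C * Y := by rw [hYdef]
      _ ≤ (1 + (1 + C) + 2 * fc + C * (1 + C) + C * fc) * Y :=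
          mul_le_mul_of_nonneg_right hCle hY0
  -- case A ⊆ K
  by_cases hAsub : A ⊆ K
  · have hAeqK : A = K := Finset.eq_of_subset_of_card_le hAsub (by omega)
    rw [hAeqK]
    have h1C : (1 : ℝ) ≤ 1 + (1 + C) + 2 * fc + C * (1 + C) + C * fc := by nlinarith
    have hYK : ‖x - B.proj K x‖ = Y := by rw [← hy]
    rw [hYK]
    nlinarith [mul_le_mul_of_nonneg_right h1C hY0]
  -- main case
  obtain ⟨a₀, ha₀A, ha₀K⟩ := Finset.not_subset.mp hAsub
  have hk1 : 1 ≤ k := Nat.one_le_iff_ne_zero.mpr hk0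
  have hAne : A.Nonempty := ⟨a₀, ha₀A⟩
  set θ : ℝ := A.inf' hAne (fun a => ‖B.coord a x‖) with hθdef
  have hθ0 : 0 ≤ θ := Finset.le_inf' hAne _ (fun a _ => norm_nonneg _)
  have hcoordy : ∀ n, n ∉ K → B.coord n x = B.coord n y := fun n hn' =>
    (B.coord_sub_proj hn' x).symm
  have hcy : ∀ n, n ∉ K → ‖B.coord n x‖ ≤ c₂ * Y := by
    intro n hn'
    rw [hcoordy n hn']
    calc ‖B.coord n y‖ ≤ ‖B.coord n‖ * ‖y‖ := (B.coord n).le_opNorm y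
      _ ≤ c₂ * Y := mul_le_mul_of_nonneg_right (hup n).2 hY0
  have hθY : θ ≤ c₂ * Y := le_trans (Finset.inf'_le _ ha₀A) (hcy a₀ ha₀K)
  have houtθ : ∀ b, b ∉ A → ‖B.coord b x‖ ≤ θ :=
    fun b hb => Finset.le_inf' hAne _ (fun a ha => hAg a ha b hb)
  set M : ℕ := mseq (k - 1) with hM
  have hKmem : ∀ b, b ∈ K ↔ (b ∈ Set.range mseq ∧ b ≤ M) := by
    intro b
    constructor
    · intro hb
      obtain ⟨i, hi, rfl⟩ := Finset.mem_image.mp hb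
      have hik : i < k := Finset.mem_range.mp hi
      exact ⟨⟨i, rfl⟩, hm.monotone (by omega : i ≤ k - 1)⟩
    · rintro ⟨⟨i, rfl⟩, hle⟩
      have hik : i ≤ k - 1 := hm.le_iff_le.mp hle
      exact Finset.mem_image.mpr ⟨i, Finset.mem_range.mpr (by omega), rfl⟩
  obtain ⟨J, hJ⟩ := exists_cut nseq hn M
  set NJ : Finset ℕ := (Finset.range J).image nseq with hNJ
  have hNJmem : ∀ b, b ∈ NJ ↔ (b ∈ Set.range nseq ∧ b ≤ M) := by
    intro b
    constructor
    · intro hb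
      obtain ⟨i, hi, rfl⟩ := Finset.mem_image.mp hb
      exact ⟨⟨i, rfl⟩, (hJ i).mp (Finset.mem_range.mp hi)⟩
    · rintro ⟨⟨i, rfl⟩, hle⟩
      exact Finset.mem_image.mpr ⟨i, Finset.mem_range.mpr ((hJ i).mpr hle), rfl⟩
  set AK : Finset ℕ := A \ K with hAKdef
  set KA : Finset ℕ := K \ A with hKAdef
  set E : Finset ℕ := KA.filter (fun b => b ∉ Set.range nseq) with hE
  set B₀ : Finset ℕ := KA.filter (fun b => b ∈ Set.range nseq) with hB₀
  set T : Finset ℕ := AK.filter (fun b => b ∈ NJ) with hT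
  set A₁ : Finset ℕ := AK.filter (fun b => b ∉ NJ) with hA₁
  have hEF : E ⊆ F := by
    intro b hb
    obtain ⟨hbKA, hbn⟩ := Finset.mem_filter.mp hb
    have hbK : b ∈ K := (Finset.mem_sdiff.mp hbKA).1
    have hbm : b ∈ Set.range mseq := ((hKmem b).mp hbK).1
    exact Set.Finite.mem_toFinset _ |>.mpr (Set.mem_symmDiff.mpr (Or.inl ⟨hbm, hbn⟩))
  have hTF : T ⊆ F := by
    intro b hb
    obtain ⟨hbAK, hbNJ⟩ := Finset.mem_filter.mp hb
    obtain ⟨hbn, hbM⟩ := (hNJmem b).mp hbNJ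
    have hbK : b ∉ K := (Finset.mem_sdiff.mp hbAK).2
    have hbm : b ∉ Set.range mseq := fun hbm => hbK ((hKmem b).mpr ⟨hbm, hbM⟩)
    exact Set.Finite.mem_toFinset _ |>.mpr (Set.mem_symmDiff.mpr (Or.inr ⟨hbn, hbm⟩))
  have hB₀NJ : B₀ ⊆ NJ := by
    intro b hb
    obtain ⟨hbKA, hbn⟩ := Finset.mem_filter.mp hb
    have hbK : b ∈ K := (Finset.mem_sdiff.mp hbKA).1
    exact (hNJmem b).mpr ⟨hbn, ((hKmem b).mp hbK).2⟩
  have hdisjA₁ : Disjoint A₁ NJ :=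
    Finset.disjoint_left.mpr fun a ha => (Finset.mem_filter.mp ha).2
  have hKAcard : KA.card ≤ AK.card := by
    have h1 : KA.card + (K ∩ A).card = K.card := Finset.card_sdiff_add_card_inter K A
    have h2 : AK.card + (A ∩ K).card = A.card := Finset.card_sdiff_add_card_inter A K
    have h3 : (K ∩ A).card = (A ∩ K).card := by rw [Finset.inter_comm]
    omega
  have hA₁T : T.card + A₁.card = AK.card :=
    Finset.card_filter_add_card_filter_not (s := AK) (p := fun b => b ∈ NJ)
  have hB₀KA : B₀.card ≤ KA.card := Finset.card_le_card (Finset.filter_subset _ _)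
  obtain ⟨Bs, hBsub', hBscard'⟩ :=
    Finset.exists_subset_card_eq (min_le_left B₀.card A₁.card)
  have hBsA₁ : Bs.card ≤ A₁.card := by omega
  set B'' : Finset ℕ := B₀ \ Bs with hB''
  have hB''card : B''.card ≤ T.card := by
    have hcs : B''.card = B₀.card - Bs.card := Finset.card_sdiff_of_subset hBsub'
    omega
  -- generic small-set bound
  have hsmall : ∀ S : Finset ℕ, S.card ≤ F.card →
      (∀ n ∈ S, ‖B.coord n x‖ ≤ c₂ * Y) → ‖B.proj S x‖ ≤ fc * Y := by
    intro S hScard hcoords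
    have h1 := B.norm_proj_le_card S x (c₂ * Y) c₂ (fun n => (hup n).1) hcoords
    have h2 : (S.card : ℝ) ≤ (F.card : ℝ) := Nat.cast_le.mpr hScard
    calc ‖B.proj S x‖ ≤ S.card * (c₂ * Y * c₂) := h1
      _ ≤ (F.card : ℝ) * (c₂ * Y * c₂) :=
          mul_le_mul_of_nonneg_right h2 (by positivity)
      _ = fc * Y := by rw [hfc]; ring
  have hnE : ‖B.proj E x‖ ≤ fc * Y := by
    refine hsmall E (Finset.card_le_card hEF) fun n hn' => ?_
    have hnA : n ∉ A := (Finset.mem_sdiff.mp (Finset.filter_subset _ _ hn')).2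
    exact le_trans (houtθ n hnA) hθY
  have hnB'' : ‖B.proj B'' x‖ ≤ fc * Y := by
    refine hsmall B'' (le_trans hB''card (Finset.card_le_card hTF)) fun n hn' => ?_
    have hnB₀ : n ∈ B₀ := (Finset.mem_sdiff.mp hn').1
    have hnA : n ∉ A := (Finset.mem_sdiff.mp (Finset.filter_subset _ _ hnB₀)).2
    exact le_trans (houtθ n hnA) hθY
  have hnT : ‖B.proj T x‖ ≤ fc * Y := by
    refine hsmall T (Finset.card_le_card hTF) fun n hn' => ?_
    exact hcy n (Finset.mem_sdiff.mp (Finset.filter_subset _ _ hn')).2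
  -- suppression quasi-greedy bound for A \ K on y
  have hAKne : AK.Nonempty := ⟨a₀, Finset.mem_sdiff.mpr ⟨ha₀A, ha₀K⟩⟩
  have hgAK : B.IsGreedySet y AK := by
    intro a ha b hb
    obtain ⟨haA, haK⟩ := Finset.mem_sdiff.mp ha
    rw [← hcoordy a haK]
    by_cases hbK : b ∈ K
    · have hzero : B.coord b y = 0 := by
        rw [hy, map_sub, B.coord_proj, if_pos hbK, sub_self]
      rw [hzero, norm_zero]
      exact norm_nonneg _
    · have hbA : b ∉ A := fun hbA => hb (Finset.mem_sdiff.mpr ⟨hbA, hbK⟩)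
      rw [← hcoordy b hbK]
      exact hAg a haA b hbA
  have h1AK : 1 ≤ AK.card := Finset.card_pos.mpr hAKne
  have happ0 := hC y AK.card h1AK AK rfl hgAK 0 (Nat.zero_le _)
  rw [show B.projSeq nseq 0 y = 0 by simp [projSeq], sub_zero] at happ0
  have hprojAKxy : B.proj AK x = B.proj AK y := by
    refine Finset.sum_congr rfl fun n hn' => ?_
    rw [hcoordy n (Finset.mem_sdiff.mp hn').2]
  have hnAK : ‖B.proj AK x‖ ≤ (1 + C) * Y := by
    rw [hprojAKxy]
    have h1 : ‖B.proj AK y‖ ≤ ‖y‖ + ‖y - B.proj AK y‖ := by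
      calc ‖B.proj AK y‖ = ‖y - (y - B.proj AK y)‖ := by rw [sub_sub_cancel]
        _ ≤ ‖y‖ + ‖y - B.proj AK y‖ := norm_sub_le _ _
    nlinarith
  -- padding
  have hpad : ‖B.proj Bs x‖ ≤ C * ‖B.proj A₁ x‖ := by
    refine B.padding hn hC1 hC J A₁ Bs (hBsub'.trans hB₀NJ) hdisjA₁ hBsA₁ θ hθ0 x
      (fun b hb => ?_) (fun a ha => ?_)
    · have hbKA : b ∈ KA := Finset.filter_subset _ _ (hBsub' hb)
      exact houtθ b (Finset.mem_sdiff.mp hbKA).2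
    · exact Finset.inf'_le _ (Finset.mem_sdiff.mp (Finset.filter_subset _ _ ha)).1
  have hsplitAK : B.proj T x + B.proj A₁ x = B.proj AK x :=
    Finset.sum_filter_add_sum_filter_not AK _ _
  have hnA₁ : ‖B.proj A₁ x‖ ≤ (1 + C) * Y + fc * Y := by
    have h1 : ‖B.proj A₁ x‖ ≤ ‖B.proj AK x‖ + ‖B.proj T x‖ := by
      calc ‖B.proj A₁ x‖ = ‖B.proj AK x - B.proj T x‖ := by
            rw [← hsplitAK]; congr 1; abel
        _ ≤ ‖B.proj AK x‖ + ‖B.proj T x‖ := norm_sub_le _ _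
    linarith
  have hnBs : ‖B.proj Bs x‖ ≤ C * ((1 + C) * Y + fc * Y) :=
    le_trans hpad (mul_le_mul_of_nonneg_left hnA₁ (by linarith))
  have hsplitKA : B.proj B₀ x + B.proj E x = B.proj KA x :=
    Finset.sum_filter_add_sum_filter_not KA _ _
  have hsplitB₀ : B.proj B'' x + B.proj Bs x = B.proj B₀ x :=
    Finset.sum_sdiff hBsub'
  have hnKA : ‖B.proj KA x‖ ≤ fc * Y + fc * Y + C * ((1 + C) * Y + fc * Y) := by
    have h1 : ‖B.proj KA x‖ ≤ ‖B.proj B'' x‖ + ‖B.proj Bs x‖ + ‖B.proj E x‖ := by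
      calc ‖B.proj KA x‖ = ‖B.proj B'' x + B.proj Bs x + B.proj E x‖ := by
            rw [hsplitB₀, hsplitKA]
        _ ≤ ‖B.proj B'' x + B.proj Bs x‖ + ‖B.proj E x‖ := norm_add_le _ _
        _ ≤ ‖B.proj B'' x‖ + ‖B.proj Bs x‖ + ‖B.proj E x‖ := by
            have := norm_add_le (B.proj B'' x) (B.proj Bs x)
            linarith
    linarith
  -- main identity
  have e1 : B.proj (A ∪ K) x = B.proj A x + B.proj KA x := by
    rw [← Finset.union_sdiff_self_eq_union, B.proj_union Finset.disjoint_sdiff]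
  have e2 : B.proj (K ∪ A) x = B.proj K x + B.proj AK x := by
    rw [← Finset.union_sdiff_self_eq_union, B.proj_union Finset.disjoint_sdiff]
  have hunion : B.proj A x + B.proj KA x = B.proj K x + B.proj AK x := by
    rw [← e1, ← e2, Finset.union_comm]
  have hident : x - B.proj A x = y + B.proj KA x - B.proj AK x := by
    have h2 : B.proj A x = B.proj K x + B.proj AK x - B.proj KA x := by
      rw [eq_sub_iff_add_eq]; exact hunion
    rw [h2, hy]; abel
  calc ‖x - B.proj A x‖ = ‖y + B.proj KA x - B.proj AK x‖ := by rw [hident]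
    _ ≤ ‖y + B.proj KA x‖ + ‖B.proj AK x‖ := norm_sub_le _ _
    _ ≤ Y + ‖B.proj KA x‖ + ‖B.proj AK x‖ := by
        have := norm_add_le y (B.proj KA x)
        linarith
    _ ≤ (1 + (1 + C) + 2 * fc + C * (1 + C) + C * fc) * Y := by nlinarith

end BasisOf

/-- If the symmetric difference of 𝐦 and 𝐧 is finite, then a basis is
(𝐧, strong partially greedy) if and only if it is (𝐦, strong partially greedy). -/
theorem statement5 {𝕜 X : Type*} [RCLike 𝕜] [NormedAddCommGroup X] [NormedSpace 𝕜 X]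
    [CompleteSpace X] (B : BasisOf 𝕜 X) (mseq nseq : ℕ → ℕ)
    (hm : StrictMono mseq) (hn : StrictMono nseq)
    (hdiff : Set.Finite (symmDiff (Set.range mseq) (Set.range nseq))) :
    B.SPG nseq ↔ B.SPG mseq := by
  constructor
  · exact fun h => B.spg_transfer hm hn hdiff h
  · exact fun h => B.spg_transfer hn hm (by rwa [symmDiff_comm]) h
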